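/- For integers 1 ≤ k ≤ r, define A(k,r) := ∑ over chains r-k = i₀ < i₁ < ... < i_l = r of ∏_{j=1}^{l} [1/(q^{i_j(i_j - r + k)} - 1)] · |GL_{i_j - i_{j-1}}|_q · |G(i_j - i_{j-1}, i_j)|_q², where |GL_d|_q = q^{d(d-1)/2}(q^d-1)(q^{d-1}-1)⋯(q-1) and |G(d,i)|_q = ∏_{j=1}^{d}(q^{j+i-d}-1)/(q^j-1). Then A(k,r) = ∏_{i=1}^{k}(q^{i+r-k}-1)/(q^i-1), i.e., A(k,r) equals the Gaussian binomial coefficient [r choose k]_q. -/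

import Mathlib

open Finset

/-- The class of `GL_d`: `q^{d(d-1)/2}(q^d-1)⋯(q-1)`. -/
noncomputable def glClass (q : ℝ) (d : ℕ) : ℝ :=
  q ^ (d * (d - 1) / 2) * ∏ j ∈ Finset.Icc 1 d, (q ^ j - 1)

/-- The class of the Grassmannian `G(d,i)`: `∏_{j=1}^d (q^{j+i-d}-1)/(q^j-1)`. -/
noncomputable def grassClass (q : ℝ) (d i : ℕ) : ℝ :=
  ∏ j ∈ Finset.Icc 1 d, (q ^ (j + i - d) - 1) / (q ^ j - 1)

/-- The predecessor of `i` in the chain `C`: the largest element of `C` below `i`. -/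
def chainPred (C : Finset ℕ) (i : ℕ) : ℕ :=
  WithBot.unbotD 0 ((C.filter (· < i)).max)

/-- `A(k,r)`: the sum over chains `r-k = i₀ < i₁ < ... < i_l = r` (encoded as subsets
`C` of `[r-k, r]` containing both `r-k` and `r`) of
`∏_j (1/(q^{i_j(i_j-r+k)}-1)) · [GL_{i_j-i_{j-1}}] · [G(i_j-i_{j-1}, i_j)]²`. -/
noncomputable def detChainSum (q : ℝ) (k r : ℕ) : ℝ :=
  ∑ C ∈ ((Finset.Icc (r - k) r).powerset.filter (fun C => r - k ∈ C ∧ r ∈ C)),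
    ∏ i ∈ C.erase (r - k),
      (1 / (q ^ (i * (i + k - r)) - 1)) * glClass q (i - chainPred C i) *
        (grassClass q (i - chainPred C i) i) ^ 2

/-! ### Interval products -/

noncomputable def Eprod (q : ℝ) (a b : ℕ) : ℝ := ∏ s ∈ Finset.Ioc a b, (q ^ s - 1)

lemma Eprod_pos {q : ℝ} (hq : 1 < q) (a b : ℕ) : 0 < Eprod q a b := by
  apply Finset.prod_pos
  intro s hs
  have hs1 : 1 ≤ s := by have := (Finset.mem_Ioc.1 hs).1; omega
  have : 1 < q ^ s := one_lt_pow₀ hq (by omega)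
  linarith

lemma Eprod_ne {q : ℝ} (hq : 1 < q) (a b : ℕ) : Eprod q a b ≠ 0 :=
  ne_of_gt (Eprod_pos hq a b)

lemma Eprod_self (q : ℝ) (a : ℕ) : Eprod q a a = 1 := by
  simp [Eprod]

lemma Eprod_succ (q : ℝ) {a b : ℕ} (h : a ≤ b) :
    Eprod q a (b + 1) = Eprod q a b * (q ^ (b + 1) - 1) := by
  rw [Eprod, Finset.prod_Ioc_succ_top h, Eprod]

lemma Eprod_mul (q : ℝ) {a b c : ℕ} (hab : a ≤ b) (hbc : b ≤ c) :
    Eprod q a b * Eprod q b c = Eprod q a c :=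
  Finset.prod_Ioc_consecutive _ hab hbc

lemma Eprod_shift (q : ℝ) (c d : ℕ) :
    ∏ j ∈ Finset.Ioc 0 d, (q ^ (j + c) - 1) = Eprod q c (c + d) := by
  rw [Eprod]
  have : Finset.Ioc c (c + d) = Finset.map (addLeftEmbedding c) (Finset.Ioc 0 d) := by
    rw [Finset.map_add_left_Ioc, add_zero]
  rw [this, Finset.prod_map]
  apply Finset.prod_congr rfl
  intro j _
  simp [addLeftEmbedding, add_comm]

/-! ### Gaussian binomials and the q-Newton identity -/

noncomputable def gb (q : ℝ) (n j : ℕ) : ℝ :=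
  if j ≤ n then Eprod q 0 n / (Eprod q 0 j * Eprod q 0 (n - j)) else 0

lemma gb_zero {q : ℝ} (hq : 1 < q) (n : ℕ) : gb q n 0 = 1 := by
  rw [gb, if_pos (Nat.zero_le n)]
  simp [Eprod_self, div_self (Eprod_ne hq 0 n)]

lemma gb_self {q : ℝ} (hq : 1 < q) (n : ℕ) : gb q n n = 1 := by
  rw [gb, if_pos le_rfl]
  simp [Eprod_self, div_self (Eprod_ne hq 0 n)]

lemma gb_top (q : ℝ) (n : ℕ) : gb q n (n + 1) = 0 := by
  rw [gb, if_neg (by omega)]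

lemma gb_pascal {q : ℝ} (hq : 1 < q) {n j : ℕ} (hj : 1 ≤ j) (hjn : j ≤ n + 1) :
    gb q (n + 1) j = gb q n (j - 1) + q ^ j * gb q n j := by
  obtain ⟨c, rfl⟩ : ∃ c, j = c + 1 := ⟨j - 1, by omega⟩
  rcases Nat.lt_or_ge n (c + 1) with h | h
  · -- j = n + 1 case
    have hcn : c = n := by omega
    subst hcn
    rw [gb_self hq, gb_top, show c + 1 - 1 = c from rfl, gb_self hq]
    ring
  · obtain ⟨e, rfl⟩ : ∃ e, n = c + 1 + e := ⟨n - (c + 1), by omega⟩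
    have e1 : Eprod q 0 (c + 1 + e + 1) = Eprod q 0 (c + e + 1) * (q ^ (c + e + 2) - 1) := by
      have := Eprod_succ q (show 0 ≤ c + e + 1 by omega)
      rw [show c + 1 + e + 1 = c + e + 1 + 1 by ring, this, show c + e + 1 + 1 = c + e + 2 by ring]
    have e2 : Eprod q 0 (c + 1) = Eprod q 0 c * (q ^ (c + 1) - 1) := by
      exact Eprod_succ q (Nat.zero_le c)
    have e3 : Eprod q 0 (e + 1) = Eprod q 0 e * (q ^ (e + 1) - 1) := by
      exact Eprod_succ q (Nat.zero_le e)
    rw [gb, gb, gb, if_pos (by omega), if_pos (by omega), if_pos (by omega)]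
    rw [show c + 1 + e + 1 - (c + 1) = e + 1 by omega, show c + 1 - 1 = c from rfl,
      show c + 1 + e - c = e + 1 by omega, show c + 1 + e - (c + 1) = e by omega,
      show c + 1 + e + 1 = c + 1 + e + 1 from rfl]
    have hne := Eprod_ne hq
    rw [show c + 1 + e = c + e + 1 by ring] at *
    rw [e1, e2, e3]
    have key : q ^ (c + e + 2) - 1 = (q ^ (c + 1) - 1) + q ^ (c + 1) * (q ^ (e + 1) - 1) := by
      have : q ^ (c + 1) * q ^ (e + 1) = q ^ (c + e + 2) := by
        rw [← pow_add]; ring_nf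
      nlinarith [this]
    have hu : q ^ (c + 1) - 1 ≠ 0 := by
      have : (1 : ℝ) < q ^ (c + 1) := one_lt_pow₀ hq (by omega); linarith
    have hv : q ^ (e + 1) - 1 ≠ 0 := by
      have : (1 : ℝ) < q ^ (e + 1) := one_lt_pow₀ hq (by omega); linarith
    have ha := hne 0 c
    have hb := hne 0 e
    rw [key]
    field_simp

lemma newton {q : ℝ} (hq : 1 < q) (n : ℕ) (x : ℝ) :
    ∑ j ∈ Finset.range (n + 1), gb q n j * ∏ t ∈ Finset.range j, (x - q ^ t) = x ^ n := by
  induction n with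
  | zero => simp [gb_zero hq]
  | succ n ih =>
    rw [Finset.sum_range_succ' (fun j => gb q (n + 1) j * ∏ t ∈ Finset.range j, (x - q ^ t))]
    simp only [Finset.range_zero, Finset.prod_empty, mul_one, gb_zero hq]
    have pascal : ∀ j ∈ Finset.range (n + 1),
        gb q (n + 1) (j + 1) * ∏ t ∈ Finset.range (j + 1), (x - q ^ t)
          = gb q n j * ∏ t ∈ Finset.range (j + 1), (x - q ^ t)
            + q ^ (j + 1) * gb q n (j + 1) * ∏ t ∈ Finset.range (j + 1), (x - q ^ t) := by
      intro j hj
      rw [gb_pascal hq (by omega) (by simp at hj; omega)]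
      simp only [Nat.add_sub_cancel]
      ring
    rw [Finset.sum_congr rfl pascal, Finset.sum_add_distrib]
    have h2 : ∑ j ∈ Finset.range (n + 1),
        q ^ (j + 1) * gb q n (j + 1) * ∏ t ∈ Finset.range (j + 1), (x - q ^ t)
        = ∑ j ∈ Finset.range (n + 1), q ^ j * gb q n j * ∏ t ∈ Finset.range j, (x - q ^ t) - 1 := by
      rcases n with _ | n
      · simp [gb_top, gb_zero hq]
      · rw [Finset.sum_range_succ (fun j =>
          q ^ (j + 1) * gb q (n + 1) (j + 1) * ∏ t ∈ Finset.range (j + 1), (x - q ^ t)) (n + 1)]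
        rw [gb_top]
        rw [Finset.sum_range_succ' (fun j =>
          q ^ j * gb q (n + 1) j * ∏ t ∈ Finset.range j, (x - q ^ t)) (n + 1)]
        simp [gb_zero hq]
    rw [h2]
    have h3' : ∑ j ∈ Finset.range (n + 1), gb q n j * ∏ t ∈ Finset.range (j + 1), (x - q ^ t)
        + ∑ j ∈ Finset.range (n + 1), q ^ j * gb q n j * ∏ t ∈ Finset.range j, (x - q ^ t)
        = ∑ j ∈ Finset.range (n + 1), x * (gb q n j * ∏ t ∈ Finset.range j, (x - q ^ t)) := by
      rw [← Finset.sum_add_distrib]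
      have : ∀ j ∈ Finset.range (n + 1),
          gb q n j * ∏ t ∈ Finset.range (j + 1), (x - q ^ t)
            + q ^ j * gb q n j * ∏ t ∈ Finset.range j, (x - q ^ t)
          = x * (gb q n j * ∏ t ∈ Finset.range j, (x - q ^ t)) := by
        intro j _
        rw [Finset.prod_range_succ]
        ring
      rw [Finset.sum_congr rfl this]
    rw [← Finset.mul_sum, ih] at h3'
    have : x ^ (n + 1) = x * x ^ n := by ring
    linarith

/-! ### Chains -/

def chains (m r : ℕ) : Finset (Finset ℕ) :=
  (Finset.Icc m r).powerset.filter (fun C => m ∈ C ∧ r ∈ C)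

lemma mem_chains {m r : ℕ} {C : Finset ℕ} :
    C ∈ chains m r ↔ C ⊆ Finset.Icc m r ∧ m ∈ C ∧ r ∈ C := by
  simp [chains]

noncomputable def gstep (q : ℝ) (m p i : ℕ) : ℝ :=
  (1 / (q ^ (i * (i - m)) - 1)) * glClass q (i - p) * (grassClass q (i - p) i) ^ 2

noncomputable def S (q : ℝ) (m r : ℕ) : ℝ :=
  ∑ C ∈ chains m r, ∏ i ∈ C.erase m, gstep q m (chainPred C i) i

lemma chainPred_eq {C : Finset ℕ} {i p : ℕ} (hp : p ∈ C) (hpi : p < i)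
    (hmax : ∀ x ∈ C, x < i → x ≤ p) : chainPred C i = p := by
  have hpf : p ∈ C.filter (· < i) := Finset.mem_filter.2 ⟨hp, hpi⟩
  have hne : (C.filter (· < i)).Nonempty := ⟨p, hpf⟩
  have h1 : (C.filter (· < i)).max' hne = p := by
    apply le_antisymm
    · apply Finset.max'_le
      intro y hy
      rcases Finset.mem_filter.1 hy with ⟨hyC, hyi⟩
      exact hmax y hyC hyi
    · exact Finset.le_max' _ _ hpf
  rw [chainPred, ← Finset.coe_max' hne, h1]
  rfl

lemma chainPred_spec {C : Finset ℕ} {i m : ℕ} (hm : m ∈ C) (hmi : m < i) :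
    chainPred C i ∈ C ∧ chainPred C i < i ∧ m ≤ chainPred C i ∧
      ∀ x ∈ C, x < i → x ≤ chainPred C i := by
  have hmf : m ∈ C.filter (· < i) := Finset.mem_filter.2 ⟨hm, hmi⟩
  have hne : (C.filter (· < i)).Nonempty := ⟨m, hmf⟩
  set p := (C.filter (· < i)).max' hne with hp
  have hpm : p ∈ C.filter (· < i) := Finset.max'_mem _ hne
  have heq : chainPred C i = p := by
    rw [chainPred, ← Finset.coe_max' hne]; rfl
  rw [heq]
  refine ⟨(Finset.mem_filter.1 hpm).1, (Finset.mem_filter.1 hpm).2, Finset.le_max' _ _ hmf, ?_⟩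
  intro x hx hxi
  exact Finset.le_max' (C.filter (· < i)) x (Finset.mem_filter.2 ⟨hx, hxi⟩)

lemma chainPred_erase {C : Finset ℕ} {r j : ℕ} (hj : j ≤ r) :
    chainPred (C.erase r) j = chainPred C j := by
  have h : (C.filter (· < j)).erase r = C.filter (· < j) := by
    apply Finset.erase_eq_of_notMem
    intro hmem
    have := (Finset.mem_filter.1 hmem).2
    omega
  rw [chainPred, chainPred, Finset.filter_erase, h]

lemma chains_self (m : ℕ) : chains m m = {{m}} := by
  ext C
  simp only [mem_chains, Finset.Icc_self, Finset.mem_singleton]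
  constructor
  · rintro ⟨hsub, hm, -⟩
    apply Finset.Subset.antisymm
    · exact hsub
    · simpa using hm
  · rintro rfl
    simp

lemma S_self (q : ℝ) (m : ℕ) : S q m m = 1 := by
  rw [S, chains_self]
  simp

lemma S_rec (q : ℝ) {m r : ℕ} (hmr : m < r) :
    S q m r = ∑ p ∈ Finset.Ico m r, S q m p * gstep q m p r := by
  rw [S]
  simp only [S, Finset.sum_mul]
  rw [Finset.sum_sigma' (Finset.Ico m r) (fun p => chains m p)
    (fun p D => (∏ i ∈ D.erase m, gstep q m (chainPred D i) i) * gstep q m p r)]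
  apply Finset.sum_nbij' (fun C => (⟨chainPred C r, C.erase r⟩ : (_ : ℕ) × Finset ℕ))
    (fun x => insert r x.2)
  · -- maps into sigma
    intro C hC
    rcases mem_chains.1 hC with ⟨hsub, hm, hr⟩
    obtain ⟨hpC, hpr, hmp, hmax⟩ := chainPred_spec hm hmr
    rw [Finset.mem_sigma]
    dsimp only
    constructor
    · exact Finset.mem_Ico.2 ⟨hmp, hpr⟩
    · rw [mem_chains]
      refine ⟨?_, ?_, ?_⟩
      · intro x hx
        rcases Finset.mem_erase.1 hx with ⟨hxr, hxC⟩
        have hxI := hsub hxC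
        rw [Finset.mem_Icc] at hxI ⊢
        have : x < r := lt_of_le_of_ne hxI.2 hxr
        exact ⟨hxI.1, hmax x hxC this⟩
      · exact Finset.mem_erase.2 ⟨by omega, hm⟩
      · exact Finset.mem_erase.2 ⟨by omega, hpC⟩
  · -- maps back
    rintro ⟨p, D⟩ hx
    rw [Finset.mem_sigma] at hx
    rcases hx with ⟨hp, hD⟩
    rcases Finset.mem_Ico.1 hp with ⟨hmp, hpr⟩
    rcases mem_chains.1 hD with ⟨hsub, hm, hpD⟩
    rw [mem_chains]
    refine ⟨?_, ?_, ?_⟩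
    · intro x hx
      rcases Finset.mem_insert.1 hx with rfl | hxD
      · exact Finset.mem_Icc.2 ⟨by omega, le_rfl⟩
      · have := Finset.mem_Icc.1 (hsub hxD)
        exact Finset.mem_Icc.2 ⟨this.1, by omega⟩
    · exact Finset.mem_insert_of_mem hm
    · exact Finset.mem_insert_self r D
  · -- left inverse
    intro C hC
    rcases mem_chains.1 hC with ⟨-, -, hr⟩
    simp [Finset.insert_erase hr]
  · -- right inverse
    rintro ⟨p, D⟩ hx
    rw [Finset.mem_sigma] at hx
    rcases hx with ⟨hp, hD⟩
    rcases Finset.mem_Ico.1 hp with ⟨hmp, hpr⟩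
    rcases mem_chains.1 hD with ⟨hsub, hm, hpD⟩
    have hrD : r ∉ D := by
      intro h
      have := Finset.mem_Icc.1 (hsub h)
      omega
    have h1 : chainPred (insert r D) r = p := by
      apply chainPred_eq (Finset.mem_insert_of_mem hpD) hpr
      intro x hx hxr
      rcases Finset.mem_insert.1 hx with rfl | hxD
      · omega
      · exact (Finset.mem_Icc.1 (hsub hxD)).2
    have h2 : (insert r D).erase r = D := Finset.erase_insert hrD
    simp [h1, h2]
  · -- values agree
    intro C hC
    rcases mem_chains.1 hC with ⟨hsub, hm, hr⟩
    obtain ⟨hpC, hpr, hmp, hmax⟩ := chainPred_spec hm hmr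
    have hrm : r ∈ C.erase m := Finset.mem_erase.2 ⟨by omega, hr⟩
    rw [← Finset.mul_prod_erase _ _ hrm]
    have hcomm : (C.erase m).erase r = (C.erase r).erase m := Finset.erase_right_comm
    rw [hcomm]
    rw [mul_comm]
    congr 1
    apply Finset.prod_congr rfl
    intro i hi
    rcases Finset.mem_erase.1 hi with ⟨him, hiCr⟩
    rcases Finset.mem_erase.1 hiCr with ⟨hir, hiC⟩
    have : i ≤ r := (Finset.mem_Icc.1 (hsub hiC)).2
    rw [chainPred_erase this]

/-! ### Algebraic simplification of the step weight -/

lemma Icc_one_eq_Ioc (k : ℕ) : Finset.Icc 1 k = Finset.Ioc 0 k := by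
  ext x; simp; omega

lemma Eprod_reflect (q : ℝ) {p i : ℕ} (hpi : p ≤ i) :
    ∏ t ∈ Finset.range (i - p), (q ^ (i - t) - 1) = Eprod q p i := by
  rw [Eprod]
  apply Finset.prod_nbij' (fun t => i - t) (fun s => i - s)
  · intro t ht
    simp only [Finset.mem_range] at ht
    simp only [Finset.mem_Ioc]
    omega
  · intro s hs
    simp only [Finset.mem_Ioc] at hs
    simp only [Finset.mem_range]
    omega
  · intro t ht
    simp only [Finset.mem_range] at ht
    omega
  · intro s hs
    simp only [Finset.mem_Ioc] at hs
    omega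
  · intro t _
    rfl

lemma prod_qpow_sub {q : ℝ} {p i : ℕ} (hpi : p ≤ i) :
    ∏ t ∈ Finset.range (i - p), (q ^ i - q ^ t)
      = q ^ ((i - p) * ((i - p) - 1) / 2) * Eprod q p i := by
  have h1 : ∀ t ∈ Finset.range (i - p), q ^ i - q ^ t = q ^ t * (q ^ (i - t) - 1) := by
    intro t ht
    simp only [Finset.mem_range] at ht
    have : q ^ t * q ^ (i - t) = q ^ i := by
      rw [← pow_add]
      congr 1
      omega
    ring_nf
    nlinarith [this]
  rw [Finset.prod_congr rfl h1, Finset.prod_mul_distrib, Finset.prod_pow_eq_pow_sum,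
    Finset.sum_range_id, Eprod_reflect q hpi]

lemma glgrass {q : ℝ} (hq : 1 < q) {p i : ℕ} (hpi : p ≤ i) :
    glClass q (i - p) * grassClass q (i - p) i ^ 2
      = q ^ ((i - p) * ((i - p) - 1) / 2) * Eprod q p i ^ 2 / Eprod q 0 (i - p) := by
  have hnum : ∏ j ∈ Finset.Icc 1 (i - p), (q ^ (j + i - (i - p)) - 1) = Eprod q p i := by
    rw [Icc_one_eq_Ioc]
    have : ∀ j ∈ Finset.Ioc 0 (i - p), q ^ (j + i - (i - p)) - 1 = q ^ (j + p) - 1 := by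
      intro j hj
      congr 2
      omega
    rw [Finset.prod_congr rfl this, Eprod_shift q p (i - p), show p + (i - p) = i by omega]
  have hgrass : grassClass q (i - p) i = Eprod q p i / Eprod q 0 (i - p) := by
    rw [grassClass, Finset.prod_div_distrib, hnum, Icc_one_eq_Ioc, ← Eprod]
  have hgl : glClass q (i - p) = q ^ ((i - p) * ((i - p) - 1) / 2) * Eprod q 0 (i - p) := by
    rw [glClass, Icc_one_eq_Ioc, ← Eprod]
  rw [hgl, hgrass]
  have h0 := Eprod_ne hq 0 (i - p)
  field_simp

lemma term_eq {q : ℝ} (hq : 1 < q) {m p i : ℕ} (hmp : m ≤ p) (hpi : p < i) :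
    Eprod q m p / Eprod q 0 (p - m) * gstep q m p i
      = gb q (i - m) (i - p) * (∏ t ∈ Finset.range (i - p), (q ^ i - q ^ t))
          * (Eprod q m i / Eprod q 0 (i - m)) / (q ^ (i * (i - m)) - 1) := by
  rw [gstep, mul_assoc (1 / (q ^ (i * (i - m)) - 1)), glgrass hq (le_of_lt hpi),
    prod_qpow_sub (le_of_lt hpi), gb,
    if_pos (by omega : i - p ≤ i - m), show i - m - (i - p) = p - m by omega]
  have hmul : Eprod q m p * Eprod q p i = Eprod q m i :=
    Eprod_mul q hmp (le_of_lt hpi)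
  have hX : q ^ (i * (i - m)) - 1 ≠ 0 := by
    have : (1 : ℝ) < q ^ (i * (i - m)) :=
      one_lt_pow₀ hq (Nat.mul_ne_zero (by omega) (by omega))
    linarith
  have h1 := Eprod_ne hq 0 (p - m)
  have h2 := Eprod_ne hq 0 (i - p)
  have h3 := Eprod_ne hq 0 (i - m)
  have h4 := Eprod_ne hq m p
  have h5 := Eprod_ne hq p i
  have h6 := Eprod_ne hq m i
  field_simp
  rw [← hmul]

lemma sum_rec {q : ℝ} (hq : 1 < q) {m i : ℕ} (hmi : m < i) :
    ∑ p ∈ Finset.Ico m i, Eprod q m p / Eprod q 0 (p - m) * gstep q m p i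
      = Eprod q m i / Eprod q 0 (i - m) := by
  set n := i - m with hn
  have hterm : ∀ p ∈ Finset.Ico m i,
      Eprod q m p / Eprod q 0 (p - m) * gstep q m p i
        = gb q n (i - p) * (∏ t ∈ Finset.range (i - p), (q ^ i - q ^ t))
            * (Eprod q m i / Eprod q 0 n) / (q ^ (i * n) - 1) := by
    intro p hp
    rcases Finset.mem_Ico.1 hp with ⟨h1, h2⟩
    exact term_eq hq h1 h2
  rw [Finset.sum_congr rfl hterm]
  have hre : ∑ p ∈ Finset.Ico m i,
      gb q n (i - p) * (∏ t ∈ Finset.range (i - p), (q ^ i - q ^ t))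
        * (Eprod q m i / Eprod q 0 n) / (q ^ (i * n) - 1)
      = ∑ j ∈ Finset.Icc 1 n,
        gb q n j * (∏ t ∈ Finset.range j, (q ^ i - q ^ t))
          * (Eprod q m i / Eprod q 0 n) / (q ^ (i * n) - 1) := by
    apply Finset.sum_nbij' (fun p => i - p) (fun j => i - j)
    · intro p hp
      simp only [Finset.mem_Ico] at hp
      simp only [Finset.mem_Icc]
      omega
    · intro j hj
      simp only [Finset.mem_Icc] at hj
      simp only [Finset.mem_Ico]
      omega
    · intro p hp
      simp only [Finset.mem_Ico] at hp
      omega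
    · intro j hj
      simp only [Finset.mem_Icc] at hj
      omega
    · intro p _
      rfl
  rw [hre]
  have hNewton := newton hq n (q ^ i)
  have hsplit : Finset.range (n + 1) = insert 0 (Finset.Icc 1 n) := by
    ext x; simp; omega
  rw [hsplit, Finset.sum_insert (by simp)] at hNewton
  simp only [gb_zero hq, Finset.range_zero, Finset.prod_empty, mul_one, one_mul] at hNewton
  have hsum : ∑ j ∈ Finset.Icc 1 n, gb q n j * ∏ t ∈ Finset.range j, (q ^ i - q ^ t)
      = q ^ (i * n) - 1 := by
    rw [← pow_mul] at hNewton
    linarith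
  have hX : q ^ (i * n) - 1 ≠ 0 := by
    have : (1 : ℝ) < q ^ (i * n) :=
      one_lt_pow₀ hq (Nat.mul_ne_zero (by omega) (by omega))
    linarith
  calc ∑ j ∈ Finset.Icc 1 n,
        gb q n j * (∏ t ∈ Finset.range j, (q ^ i - q ^ t))
          * (Eprod q m i / Eprod q 0 n) / (q ^ (i * n) - 1)
      = (∑ j ∈ Finset.Icc 1 n, gb q n j * ∏ t ∈ Finset.range j, (q ^ i - q ^ t))
          * ((Eprod q m i / Eprod q 0 n) / (q ^ (i * n) - 1)) := by
        rw [Finset.sum_mul]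
        apply Finset.sum_congr rfl
        intro j _
        ring
    _ = Eprod q m i / Eprod q 0 n := by
        rw [hsum]
        field_simp

lemma S_eq {q : ℝ} (hq : 1 < q) : ∀ r m : ℕ, m ≤ r → S q m r = Eprod q m r / Eprod q 0 (r - m) := by
  intro r
  induction r using Nat.strong_induction_on with
  | _ r IH =>
    intro m hmr
    rcases eq_or_lt_of_le hmr with rfl | hlt
    · simp [S_self, Eprod_self]
    · rw [S_rec q hlt]
      have : ∀ p ∈ Finset.Ico m r,
          S q m p * gstep q m p r = Eprod q m p / Eprod q 0 (p - m) * gstep q m p r := by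
        intro p hp
        rcases Finset.mem_Ico.1 hp with ⟨h1, h2⟩
        rw [IH p h2 m h1]
      rw [Finset.sum_congr rfl this, sum_rec hq hlt]

/-- The main combinatorial identity: `A(k,r)` equals the Gaussian binomial `[r choose k]_q`. -/
theorem detChainSum_eq_gauss_binomial (k r : ℕ) (hk : 1 ≤ k) (hkr : k ≤ r)
    (q : ℝ) (hq : 1 < q) :
    detChainSum q k r = ∏ i ∈ Finset.Icc 1 k, (q ^ (i + r - k) - 1) / (q ^ i - 1) := by
  have h1 : detChainSum q k r = S q (r - k) r := by
    rw [detChainSum, S]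
    apply Finset.sum_congr rfl
    intro C hC
    rcases mem_chains.1 hC with ⟨hsub, -, -⟩
    apply Finset.prod_congr rfl
    intro i hi
    have hiC : i ∈ C := Finset.mem_of_mem_erase hi
    have hiI := Finset.mem_Icc.1 (hsub hiC)
    have hexp : i + k - r = i - (r - k) := by omega
    rw [gstep, hexp]
  have h2 : ∏ i ∈ Finset.Icc 1 k, (q ^ (i + r - k) - 1) / (q ^ i - 1)
      = Eprod q (r - k) r / Eprod q 0 k := by
    rw [Finset.prod_div_distrib, Icc_one_eq_Ioc]
    have hnum : ∀ i ∈ Finset.Ioc 0 k, q ^ (i + r - k) - 1 = q ^ (i + (r - k)) - 1 := by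
      intro i hi
      congr 2
      omega
    rw [Finset.prod_congr rfl hnum, Eprod_shift q (r - k) k, show r - k + k = r by omega, ← Eprod]
  rw [h1, h2, S_eq hq r (r - k) (by omega), show r - (r - k) = k by omega]
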